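/- Let T be a contraction on a complex Hilbert space H, let E be a complex Hilbert space, and let Λ : H → ℓ²(ℕ, E) be a linear isometry satisfying Λ ∘ T* = S* ∘ Λ, where S is the unilateral shift on ℓ²(ℕ, E). Then there exists a unique linear isometry W from the closure of the range of D_T into E such that (Λ h)(n) = W(D_T T*ⁿ h) for all h ∈ H and all n ∈ ℕ. -/

import Mathlib

open ContinuousLinearMap
open scoped ENNReal

set_option linter.unusedSectionVars false

noncomputable section

section ShiftOperator

variable {E : Type*} [NormedAddCommGroup E] [InnerProductSpace ℂ E]

/-- The right-shifted sequence: `(shiftFun f) 0 = 0`, `(shiftFun f) (n+1) = f n`. -/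
def shiftFun (f : ℕ → E) : ℕ → E
  | 0 => 0
  | (n + 1) => f n

lemma summable_of_lp (f : lp (fun _ : ℕ => E) 2) :
    Summable fun n => ‖(f : ∀ _ : ℕ, E) n‖ ^ (2 : ℝ) := by
  have h := lp.memℓp f
  have h2 : (0 : ℝ) < (2 : ℝ≥0∞).toReal := by norm_num
  simpa using (memℓp_gen_iff h2).mp h

lemma summable_shiftFun (f : lp (fun _ : ℕ => E) 2) :
    Summable fun n => ‖shiftFun (f : ∀ _ : ℕ, E) n‖ ^ (2 : ℝ) := by
  have h1 : Summable fun n => ‖shiftFun (f : ∀ _ : ℕ, E) (n + 1)‖ ^ (2 : ℝ) := by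
    simpa [shiftFun] using summable_of_lp f
  exact (summable_nat_add_iff
    (f := fun n => ‖shiftFun ((f : ∀ _ : ℕ, E)) n‖ ^ (2 : ℝ)) 1).mp h1

lemma memℓp_shiftFun (f : lp (fun _ : ℕ => E) 2) : Memℓp (shiftFun (f : ∀ _ : ℕ, E)) 2 := by
  apply memℓp_gen
  simpa using summable_shiftFun f

lemma norm_shift_eq (f : lp (fun _ : ℕ => E) 2)
    (g : lp (fun _ : ℕ => E) 2) (hg : (g : ∀ _ : ℕ, E) = shiftFun (f : ∀ _ : ℕ, E)) :
    ‖g‖ = ‖f‖ := by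
  have h2 : (0 : ℝ) < (2 : ℝ≥0∞).toReal := by norm_num
  rw [lp.norm_eq_tsum_rpow h2 f, lp.norm_eq_tsum_rpow h2 g]
  congr 1
  have htsum : (∑' n, ‖shiftFun (f : ∀ _ : ℕ, E) n‖ ^ (2 : ℝ)) =
      ∑' n, ‖(f : ∀ _ : ℕ, E) n‖ ^ (2 : ℝ) := by
    rw [(summable_shiftFun f).tsum_eq_zero_add]
    simp [shiftFun]
  simp only [hg]
  simpa using htsum

/-- The unilateral shift `S` on `ℓ²(ℕ, E)`: `(S f)(0) = 0` and `(S f)(n) = f (n-1)` for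
`n ≥ 1`. -/
def shiftOp (E : Type*) [NormedAddCommGroup E] [InnerProductSpace ℂ E] :
    lp (fun _ : ℕ => E) 2 →L[ℂ] lp (fun _ : ℕ => E) 2 :=
  LinearMap.mkContinuous
    { toFun := fun f => ⟨shiftFun (f : ∀ _ : ℕ, E), memℓp_shiftFun f⟩
      map_add' := by
        intro f g
        apply lp.ext
        funext n
        cases n <;> simp [shiftFun, lp.coeFn_add, Pi.add_apply] <;> first | rfl | exact (add_zero (0 : E)).symm
      map_smul' := by
        intro c f
        apply lp.ext
        funext n
        cases n <;> simp [shiftFun, lp.coeFn_smul, Pi.smul_apply] }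
    1
    (by
      intro f
      rw [one_mul]
      exact le_of_eq (norm_shift_eq f _ rfl))

@[simp] lemma shiftOp_apply_zero (f : lp (fun _ : ℕ => E) 2) :
    (shiftOp E f : ∀ _ : ℕ, E) 0 = 0 := rfl

@[simp] lemma shiftOp_apply_succ (f : lp (fun _ : ℕ => E) 2) (n : ℕ) :
    (shiftOp E f : ∀ _ : ℕ, E) (n + 1) = (f : ∀ _ : ℕ, E) n := rfl

end ShiftOperator

section Defect

variable {H : Type*} [NormedAddCommGroup H] [InnerProductSpace ℂ H] [CompleteSpace H]

/-- The defect operator `D_T = (I - T T*)^{1/2}` of a contraction `T`. -/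
def defect (T : H →L[ℂ] H) : H →L[ℂ] H :=
  CFC.sqrt (1 - T * adjoint T)

end Defect

section DefectClosure

variable {H : Type*} [NormedAddCommGroup H] [InnerProductSpace ℂ H] [CompleteSpace H]

/-- The closure of the range of the defect operator of `T`. -/
def defectClos (T : H →L[ℂ] H) : Submodule ℂ H :=
  (LinearMap.range (defect T : H →ₗ[ℂ] H)).topologicalClosure

/-- `D_T x`, viewed as an element of the closure of the range of `D_T`. -/
def defectElem (T : H →L[ℂ] H) (x : H) : defectClos T :=
  ⟨defect T x, Submodule.le_topologicalClosure _ (LinearMap.mem_range_self _ x)⟩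

instance (T : H →L[ℂ] H) : CompleteSpace (defectClos T) :=
  IsClosed.completeSpace_coe (hs := Submodule.isClosed_topologicalClosure _)

end DefectClosure

/-! Put `W₀ h = (Λ h) 0`. The intertwining relation shifts coordinates, `(Λ h) n = W₀ (T*ⁿ h)`,
and splitting off the zeroth coordinate gives `‖h‖² = ‖Λ h‖² = ‖W₀ h‖² + ‖S* Λ h‖²`
`= ‖W₀ h‖² + ‖T* h‖²`, so `‖W₀ h‖² = ‖h‖² - ‖T* h‖² = ‖D_T h‖²`. Hence `D_T h ↦ W₀ h` is a
well-defined isometry on the range of `D_T`, and it extends uniquely to the closure. -/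

section Extension

variable {𝕜 E Eₗ F : Type*} [NontriviallyNormedField 𝕜] [AddCommGroup E] [Module 𝕜 E]
  [SeminormedAddCommGroup Eₗ] [NormedSpace 𝕜 Eₗ]
  [NormedAddCommGroup F] [NormedSpace 𝕜 F] [CompleteSpace F]

theorem LinearMap.existsUnique_isometry_of_norm_eq {f : E →ₗ[𝕜] F} {e : E →ₗ[𝕜] Eₗ}
    (h_dense : DenseRange e) (h_norm : ∀ x, ‖f x‖ = ‖e x‖) :
    ∃! g : Eₗ →L[𝕜] F, Isometry g ∧ ∀ x, f x = g (e x) := by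
  have h_bound : ∀ x, ‖f x‖ ≤ 1 * ‖e x‖ := fun x => by rw [one_mul, h_norm]
  have h_ext (x : E) : f.extendOfNorm e (e x) = f x := extendOfNorm_eq h_dense ⟨1, h_bound⟩ x
  refine ⟨f.extendOfNorm e, ⟨?_, fun x => (h_ext x).symm⟩, ?_⟩
  · refine AddMonoidHomClass.isometry_of_norm _ fun y =>
      h_dense.induction_on y (isClosed_eq (by fun_prop) (by fun_prop)) fun x => ?_
    rw [h_ext, h_norm]
  · rintro g ⟨-, hg⟩
    exact (extendOfNorm_unique h_dense 1 h_bound g (LinearMap.ext fun x => (hg x).symm)).symm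

end Extension

theorem LinearMap.denseRange_codRestrict_topologicalClosure {R M N : Type*} [Semiring R]
    [AddCommMonoid M] [Module R M] [AddCommMonoid N] [Module R N] [TopologicalSpace N]
    [ContinuousAdd N] [ContinuousConstSMul R N] (B : M →ₗ[R] N) :
    DenseRange (B.codRestrict (LinearMap.range B).topologicalClosure
      fun x => Submodule.le_topologicalClosure _ (LinearMap.mem_range_self B x)) := by
  rw [DenseRange, Subtype.dense_iff, ← Set.range_comp]
  exact fun y hy => hy

theorem CStarAlgebra.mul_star_le_one {A : Type*} [CStarAlgebra A] [PartialOrder A]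
    [StarOrderedRing A] {a : A} (ha : ‖a‖ ≤ 1) : a * star a ≤ 1 := by
  rw [← norm_le_one_iff_of_nonneg _ (mul_star_self_nonneg a), CStarRing.norm_self_mul_star]
  exact mul_le_one₀ ha (norm_nonneg a) ha

section Defect

variable {H : Type*} [NormedAddCommGroup H] [InnerProductSpace ℂ H] [CompleteSpace H]

theorem ContinuousLinearMap.norm_sqrt_apply_sq {A : H →L[ℂ] H} (hA : 0 ≤ A) (x : H) :
    ‖CFC.sqrt A x‖ ^ 2 = RCLike.re (inner ℂ (A x) x) := by
  rw [apply_norm_sq_eq_inner_adjoint_left, ← star_eq_adjoint,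
    (IsSelfAdjoint.of_nonneg (CFC.sqrt_nonneg A)).star_eq, ← mul_def, CFC.sqrt_mul_sqrt_self A hA]

theorem norm_defect_apply_sq {T : H →L[ℂ] H} (hT : ‖T‖ ≤ 1) (x : H) :
    ‖defect T x‖ ^ 2 = ‖x‖ ^ 2 - ‖adjoint T x‖ ^ 2 := by
  have hle : T * adjoint T ≤ 1 := by
    simpa only [star_eq_adjoint] using CStarAlgebra.mul_star_le_one hT
  rw [defect, norm_sqrt_apply_sq (sub_nonneg.2 hle), apply_norm_sq_eq_inner_adjoint_left,
    adjoint_adjoint, sub_apply, inner_sub_left, map_sub, one_apply_eq_self, inner_self_eq_norm_sq]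
  rfl

end Defect

theorem lp.hasSum_norm_sq {ι : Type*} {G : ι → Type*} [∀ i, NormedAddCommGroup (G i)]
    (f : lp G 2) : HasSum (fun i => ‖f i‖ ^ 2) (‖f‖ ^ 2) := by
  simpa using lp.hasSum_norm (p := 2) (by norm_num) f

section Shift

variable {E : Type*} [NormedAddCommGroup E] [InnerProductSpace ℂ E]

theorem shiftOp_single (n : ℕ) (v : E) :
    shiftOp E (lp.single 2 n v) = lp.single 2 (n + 1) v := by
  ext m
  cases m <;> simp [lp.single_apply, Pi.single_apply]

variable [CompleteSpace E]

theorem adjoint_shiftOp_apply (f : lp (fun _ : ℕ => E) 2) (n : ℕ) :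
    adjoint (shiftOp E) f n = f (n + 1) :=
  ext_inner_right ℂ fun v => by
    rw [← lp.inner_single_right, adjoint_inner_left, shiftOp_single, lp.inner_single_right]

theorem norm_sq_eq_norm_apply_zero_sq_add_norm_adjoint_shiftOp_sq (f : lp (fun _ : ℕ => E) 2) :
    ‖f‖ ^ 2 = ‖f 0‖ ^ 2 + ‖adjoint (shiftOp E) f‖ ^ 2 := by
  have h := lp.hasSum_norm_sq (adjoint (shiftOp E) f)
  simp only [adjoint_shiftOp_apply] at h
  have h' := (hasSum_nat_add_iff (f := fun n => ‖f n‖ ^ 2) 1).1 h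
  rw [Finset.sum_range_one, add_comm] at h'
  exact (lp.hasSum_norm_sq f).unique h'

end Shift

section Dilation

variable {H : Type*} [NormedAddCommGroup H] [InnerProductSpace ℂ H] [CompleteSpace H]
  {E : Type*} [NormedAddCommGroup E] [InnerProductSpace ℂ E] [CompleteSpace E]
  {T : H →L[ℂ] H} {Λ : H →L[ℂ] lp (fun _ : ℕ => E) 2}

theorem apply_succ_of_intertwining (hint : Λ ∘L adjoint T = adjoint (shiftOp E) ∘L Λ)
    (h : H) (n : ℕ) : Λ h (n + 1) = Λ (adjoint T h) n := by
  rw [← adjoint_shiftOp_apply, ← comp_apply, ← hint, comp_apply]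

theorem apply_eq_apply_zero_adjoint_pow (hint : Λ ∘L adjoint T = adjoint (shiftOp E) ∘L Λ)
    (h : H) (n : ℕ) : Λ h n = Λ ((adjoint T ^ n) h) 0 := by
  induction n generalizing h with
  | zero => simp
  | succ n ih => rw [apply_succ_of_intertwining hint, ih, pow_succ, mul_apply_eq_comp]

theorem norm_apply_zero_eq_norm_defect (hT : ‖T‖ ≤ 1) (hΛ : Isometry Λ)
    (hint : Λ ∘L adjoint T = adjoint (shiftOp E) ∘L Λ) (x : H) :
    ‖Λ x 0‖ = ‖defect T x‖ := by
  have hnorm (y : H) : ‖Λ y‖ = ‖y‖ := hΛ.norm_map_of_map_zero (map_zero Λ) y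
  have hshift : adjoint (shiftOp E) (Λ x) = Λ (adjoint T x) := by
    rw [← comp_apply, ← hint, comp_apply]
  have hsplit := norm_sq_eq_norm_apply_zero_sq_add_norm_adjoint_shiftOp_sq (Λ x)
  rw [hshift, hnorm, hnorm] at hsplit
  rw [← sq_eq_sq₀ (norm_nonneg _) (norm_nonneg _), norm_defect_apply_sq hT]
  linarith

end Dilation

/-- Canonical factorization of isometric dilations: if `Λ : H → ℓ²(ℕ, E)` is a linear
isometry with `Λ ∘ T* = S* ∘ Λ` for a contraction `T`, then there is a unique linear
isometry `W` from the closure of the range of `D_T` into `E` such that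
`(Λ h)(n) = W (D_T T*ⁿ h)` for all `h` and `n`. -/
theorem factorization_of_isometric_dilations
    {H : Type*} [NormedAddCommGroup H] [InnerProductSpace ℂ H] [CompleteSpace H]
    {E : Type*} [NormedAddCommGroup E] [InnerProductSpace ℂ E] [CompleteSpace E]
    (T : H →L[ℂ] H) (hT : ‖T‖ ≤ 1)
    (Λ : H →L[ℂ] lp (fun _ : ℕ => E) 2) (hΛ : Isometry Λ)
    (hint : Λ ∘L adjoint T = adjoint (shiftOp E) ∘L Λ) :
    ∃! W : ↥(defectClos T) →L[ℂ] E,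
      Isometry W ∧
      ∀ (h : H) (n : ℕ), (Λ h : ∀ _ : ℕ, E) n = W (defectElem T (((adjoint T) ^ n) h)) := by
  have hfactor := LinearMap.existsUnique_isometry_of_norm_eq
    (f := lp.evalₗ (fun _ : ℕ => E) 2 0 ∘ₗ (Λ : H →ₗ[ℂ] lp (fun _ : ℕ => E) 2))
    (LinearMap.denseRange_codRestrict_topologicalClosure (defect T : H →ₗ[ℂ] H))
    (norm_apply_zero_eq_norm_defect hT hΛ hint)
  refine (existsUnique_congr fun W => and_congr_right fun _ => ?_).1 hfactor
  exact ⟨fun hW h n => (apply_eq_apply_zero_adjoint_pow hint h n).trans (hW _),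
    fun hW x => (by simpa using hW x 0 : Λ x 0 = W (defectElem T x))⟩
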